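/- arXiv:2407.19911 — 2 statements merged into one kernel-verified Lean document; each statement's English description precedes it below -/
import Mathlib

section
/- Let (S, Act, δ) be a control system (δ : S × Act → 𝒫(S)), φ ⊆ S a safety property, and 𝒢 a partition of S. Let C* be a set of cells such that C* ⊆ {C ∈ 𝒢 | C ⊆ φ} and for every C ∈ C* there exists an action a ∈ Act such that every cell C' with C →ₐ C' satisfies C' ∈ C* (where C →ₐ C' iff ∃ s ∈ C, δ(s,a) ∩ C' ≠ ∅). Define the strategy σ(s) = {a ∈ Act | ∀ C', [s]_𝒢 →ₐ C' → C' ∈ C*} for s in X = ⋃_{C ∈ C*} C. Then: (1) σ(s) is nonempty for all s ∈ X; (2) for all s ∈ X and a ∈ σ(s), δ(s, a) ⊆ X; and (3) X ⊆ φ. -/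
theorem mem_biUnion_iff_cell_mem {S : Type*} {𝒢 Cstar : Set (Set S)} {cell : S → Set S}
    (h𝒢 : 𝒢.PairwiseDisjoint id) (hcell : ∀ s, cell s ∈ 𝒢 ∧ s ∈ cell s) (hsub : Cstar ⊆ 𝒢)
    {s : S} : s ∈ ⋃ C ∈ Cstar, C ↔ cell s ∈ Cstar := by
  rw [Set.mem_iUnion₂]
  constructor
  · rintro ⟨C, hC, hsC⟩
    rwa [h𝒢.elim_set (hcell s).1 (hsub hC) s (hcell s).2 hsC]
  · exact fun hs => ⟨cell s, hs, (hcell s).2⟩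

theorem grid_safety_strategy_sound_general {S Act : Type*}
    (δ : S → Act → Set S) (φ : Set S)
    -- 𝒢 is a partition of S:
    (𝒢 : Set (Set S))
    (hdisj : ∀ C ∈ 𝒢, ∀ C' ∈ 𝒢, C ≠ C' → C ∩ C' = ∅)
    -- cell s = [s]_𝒢, the cell containing s:
    (cell : S → Set S)
    (hcell : ∀ s : S, cell s ∈ 𝒢 ∧ s ∈ cell s)
    -- the set of cells C*:
    (Cstar : Set (Set S))
    (hsafeCells : Cstar ⊆ {C ∈ 𝒢 | C ⊆ φ})
    (hstep : ∀ C ∈ Cstar, ∃ a : Act, ∀ C' ∈ 𝒢,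
      (∃ s ∈ C, (δ s a ∩ C').Nonempty) → C' ∈ Cstar)
    -- the controllable region X and the strategy σ:
    (X : Set S) (hX : X = ⋃ C ∈ Cstar, C)
    (σ : S → Set Act)
    (hσ : ∀ s : S, σ s = {a : Act | ∀ C' ∈ 𝒢,
      (∃ s' ∈ cell s, (δ s' a ∩ C').Nonempty) → C' ∈ Cstar}) :
    (∀ s ∈ X, (σ s).Nonempty) ∧
    (∀ s ∈ X, ∀ a ∈ σ s, δ s a ⊆ X) ∧
    X ⊆ φ := by
  have h𝒢 : 𝒢.PairwiseDisjoint id := fun C hC C' hC' hne =>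
    Set.disjoint_iff_inter_eq_empty.2 (hdisj C hC C' hC' hne)
  have mem_X_iff {s : S} : s ∈ X ↔ cell s ∈ Cstar :=
    hX ▸ mem_biUnion_iff_cell_mem h𝒢 hcell fun _ hC => (hsafeCells hC).1
  refine ⟨fun s hs => ?_, fun s _ a ha t ht => ?_, fun s hs => ?_⟩
  · obtain ⟨a, ha⟩ := hstep (cell s) (mem_X_iff.1 hs)
    exact ⟨a, hσ s ▸ ha⟩
  · rw [hσ] at ha
    exact mem_X_iff.2 (ha (cell t) (hcell t).1 ⟨s, (hcell s).2, t, ht, (hcell t).2⟩)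
  · exact (hsafeCells (mem_X_iff.1 hs)).2 (hcell s).2

/-- Soundness of a grid-induced safety strategy (Lemma 1). -/
theorem grid_safety_strategy_sound {S Act : Type*}
    (δ : S → Act → Set S) (φ : Set S)
    -- 𝒢 is a partition of S:
    (𝒢 : Set (Set S))
    (hdisj : ∀ C ∈ 𝒢, ∀ C' ∈ 𝒢, C ≠ C' → C ∩ C' = ∅)
    (hcover : ⋃₀ 𝒢 = Set.univ)
    -- cell s = [s]_𝒢, the cell containing s:
    (cell : S → Set S)
    (hcell : ∀ s : S, cell s ∈ 𝒢 ∧ s ∈ cell s)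
    -- the set of cells C*:
    (Cstar : Set (Set S))
    (hsafeCells : Cstar ⊆ {C ∈ 𝒢 | C ⊆ φ})
    (hstep : ∀ C ∈ Cstar, ∃ a : Act, ∀ C' ∈ 𝒢,
      (∃ s ∈ C, (δ s a ∩ C').Nonempty) → C' ∈ Cstar)
    -- the controllable region X and the strategy σ:
    (X : Set S) (hX : X = ⋃ C ∈ Cstar, C)
    (σ : S → Set Act)
    (hσ : ∀ s : S, σ s = {a : Act | ∀ C' ∈ 𝒢,
      (∃ s' ∈ cell s, (δ s' a ∩ C').Nonempty) → C' ∈ Cstar}) :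
    (∀ s ∈ X, (σ s).Nonempty) ∧
    (∀ s ∈ X, ∀ a ∈ σ s, δ s a ⊆ X) ∧
    X ⊆ φ :=
  grid_safety_strategy_sound_general δ φ 𝒢 hdisj cell hcell Cstar hsafeCells hstep X hX σ hσ
end

section
/- Let (S, Act, δ_S) be a control system, f : S → T a transformation, 𝒢 a partition of T, and define the transformed successor δ_T(C, a) = f(δ_S(f⁻¹(C), a)) for cells C. Suppose C* ⊆ 𝒢 is a set of cells such that for every C ∈ C* there exists a ∈ Act with δ_T(C, a) ⊆ ⋃_{C' ∈ C*} C', and every C ∈ C* satisfies f⁻¹(C) ⊆ φ for a safety set φ ⊆ S. Define X = f⁻¹(⋃_{C ∈ C*} C) and σ(s) = {a | δ_T([f(s)]_𝒢, a) ⊆ ⋃_{C' ∈ C*} C'} for s ∈ X. Then every trajectory s₀ a₀ s₁ a₁ … with s₀ ∈ X, aᵢ ∈ σ(sᵢ), sᵢ₊₁ ∈ δ_S(sᵢ, aᵢ) remains within X, and hence within φ. -/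
/-! The cell of `f s` contains `f s`, so every successor of `s` under an action allowed by `σ`
is mapped by `f` into the union of the controllable cells, i.e. lies in `X`. Hence a trajectory
starting in `X` never leaves it, and `X ⊆ φ` because each controllable cell pulls back into `φ`. -/

open Set

theorem mem_of_image_biUnion_preimage_subset {S T Act : Type*} {δS : S → Act → Set S}
    {f : S → T} {C U : Set T} {x y : S} {b : Act}
    (hx : f x ∈ C) (hb : f '' (⋃ x' ∈ f ⁻¹' C, δS x' b) ⊆ U) (hy : y ∈ δS x b) :
    f y ∈ U :=
  hb (mem_image_of_mem f (mem_biUnion hx hy))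

theorem transformed_shield_sound_general {S T Act : Type*}
    (δS : S → Act → Set S) (f : S → T) (φ : Set S)
    -- 𝒢 is a partition of T:
    (𝒢 : Set (Set T))
    (cell : T → Set T)
    (hcell : ∀ t : T, cell t ∈ 𝒢 ∧ t ∈ cell t)
    -- transformed successor on cells: δ_T(C,a) = f(δ_S(f⁻¹(C),a)):
    (δT : Set T → Act → Set T)
    (hδT : ∀ (C : Set T) (a : Act), δT C a = f '' (⋃ s ∈ f ⁻¹' C, δS s a))
    -- the controllable cells C*:
    (Cstar : Set (Set T))
    (hsafe : ∀ C ∈ Cstar, f ⁻¹' C ⊆ φ)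
    -- the controllable region X and the strategy σ:
    (X : Set S) (hX : X = f ⁻¹' (⋃ C ∈ Cstar, C))
    (σ : S → Set Act)
    (hσ : ∀ s : S, σ s = {a : Act | δT (cell (f s)) a ⊆ ⋃ C' ∈ Cstar, C'})
    -- a trajectory s₀ a₀ s₁ a₁ …:
    (s : ℕ → S) (a : ℕ → Act)
    (h0 : s 0 ∈ X)
    (ha : ∀ n, a n ∈ σ (s n))
    (hs : ∀ n, s (n + 1) ∈ δS (s n) (a n)) :
    ∀ n, s n ∈ X ∧ s n ∈ φ := by
  have hXφ : X ⊆ φ := by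
    rw [hX, preimage_iUnion₂]
    exact iUnion₂_subset hsafe
  have hmemX : ∀ n, s n ∈ X
    | 0 => h0
    | n + 1 => by
      have hallowed := ha n
      rw [hσ, mem_ofPred_eq, hδT] at hallowed
      rw [hX, mem_preimage]
      exact mem_of_image_biUnion_preimage_subset (hcell _).2 hallowed (hs n)
  exact fun n => ⟨hmemX n, hXφ (hmemX n)⟩

/-- Theorem 1 (trajectory form): every trajectory of the transformed shield
starting in X stays in X and hence in φ. -/
theorem transformed_shield_sound {S T Act : Type*}
    (δS : S → Act → Set S) (f : S → T) (φ : Set S)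
    -- 𝒢 is a partition of T:
    (𝒢 : Set (Set T))
    (hdisj : ∀ C ∈ 𝒢, ∀ C' ∈ 𝒢, C ≠ C' → C ∩ C' = ∅)
    (hcover : ⋃₀ 𝒢 = Set.univ)
    (cell : T → Set T)
    (hcell : ∀ t : T, cell t ∈ 𝒢 ∧ t ∈ cell t)
    -- transformed successor on cells: δ_T(C,a) = f(δ_S(f⁻¹(C),a)):
    (δT : Set T → Act → Set T)
    (hδT : ∀ (C : Set T) (a : Act), δT C a = f '' (⋃ s ∈ f ⁻¹' C, δS s a))
    -- the controllable cells C*: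
    (Cstar : Set (Set T)) (hCstar : Cstar ⊆ 𝒢)
    (hstep : ∀ C ∈ Cstar, ∃ a : Act, δT C a ⊆ ⋃ C' ∈ Cstar, C')
    (hsafe : ∀ C ∈ Cstar, f ⁻¹' C ⊆ φ)
    -- the controllable region X and the strategy σ:
    (X : Set S) (hX : X = f ⁻¹' (⋃ C ∈ Cstar, C))
    (σ : S → Set Act)
    (hσ : ∀ s : S, σ s = {a : Act | δT (cell (f s)) a ⊆ ⋃ C' ∈ Cstar, C'})
    -- a trajectory s₀ a₀ s₁ a₁ …:
    (s : ℕ → S) (a : ℕ → Act)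
    (h0 : s 0 ∈ X)
    (ha : ∀ n, a n ∈ σ (s n))
    (hs : ∀ n, s (n + 1) ∈ δS (s n) (a n)) :
    ∀ n, s n ∈ X ∧ s n ∈ φ :=
  transformed_shield_sound_general δS f φ 𝒢 cell hcell δT hδT Cstar hsafe X hX σ hσ s a h0 ha hs
end
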